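/- Let V be a real inner product space. The Gaussian kernel (v, w) ↦ exp(−‖v − w‖²/2) is positive semidefinite: for every n ∈ ℕ, every v : Fin n → V and every c : Fin n → ℝ one has 0 ≤ Σ_{i,j} (c i)·(c j)·exp(−‖v i − v j‖²/2). (This is the content of the lemma asserting the existence of the Fock space F(V) with a total system of vectors ψ_v satisfying ⟨ψ_v, ψ_w⟩ = exp(−‖v − w‖²/2).) -/
import Mathlib

open scoped RealInnerProductSpace Nat

/-- Powers of a Gram kernel are positive semidefinite. -/
lemma pow_gram_psd {τ : Type*} [Fintype τ] {n : ℕ} (f : Fin n → τ → ℝ)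
    (a : Fin n → ℝ) (k : ℕ) :
    0 ≤ ∑ i, ∑ j, a i * a j * (∑ t, f i t * f j t) ^ k := by
  have key : ∀ i j : Fin n, a i * a j * (∑ t, f i t * f j t) ^ k
      = ∑ p : Fin k → τ, (a i * ∏ s, f i (p s)) * (a j * ∏ s, f j (p s)) := by
    intro i j
    rw [Fintype.sum_pow, Finset.mul_sum]
    refine Finset.sum_congr rfl fun p _ => ?_
    rw [Finset.prod_mul_distrib]; ring
  simp only [key]
  have h1 : ∀ i : Fin n,
      (∑ j, ∑ p : Fin k → τ, (a i * ∏ s, f i (p s)) * (a j * ∏ s, f j (p s)))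
      = ∑ p : Fin k → τ, ∑ j, (a i * ∏ s, f i (p s)) * (a j * ∏ s, f j (p s)) :=
    fun i => Finset.sum_comm
  simp only [h1]
  rw [Finset.sum_comm]
  refine Finset.sum_nonneg fun p _ => ?_
  rw [← Finset.sum_mul_sum]
  exact mul_self_nonneg _

/-- The Gram kernel of any finite family of vectors has PSD powers. -/
lemma pow_inner_psd {V : Type*} [NormedAddCommGroup V] [InnerProductSpace ℝ V]
    {n : ℕ} (v : Fin n → V) (a : Fin n → ℝ) (k : ℕ) :
    0 ≤ ∑ i, ∑ j, a i * a j * (⟪v i, v j⟫) ^ k := by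
  set S := Submodule.span ℝ (Set.range v) with hS
  haveI : FiniteDimensional ℝ S := FiniteDimensional.span_of_finite ℝ (Set.finite_range v)
  have hv : ∀ i, v i ∈ S := fun i => Submodule.subset_span ⟨i, rfl⟩
  set b := stdOrthonormalBasis ℝ S
  have hf : ∀ i j, (⟪v i, v j⟫ : ℝ)
      = ∑ t, (⟪(⟨v i, hv i⟩ : S), b t⟫ : ℝ) * ⟪(⟨v j, hv j⟩ : S), b t⟫ := by
    intro i j
    rw [show (⟪v i, v j⟫ : ℝ) = ⟪(⟨v i, hv i⟩ : S), (⟨v j, hv j⟩ : S)⟫ from rfl,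
      ← b.sum_inner_mul_inner (⟨v i, hv i⟩ : S) (⟨v j, hv j⟩ : S)]
    exact Finset.sum_congr rfl fun t _ => by
      rw [real_inner_comm (⟨v j, hv j⟩ : S) (b t)]
  simp only [hf]
  exact pow_gram_psd (fun i t => (⟪(⟨v i, hv i⟩ : S), b t⟫ : ℝ)) a k

theorem gaussian_kernel_posdef {V : Type*} [NormedAddCommGroup V] [InnerProductSpace ℝ V]
    (n : ℕ) (v : Fin n → V) (c : Fin n → ℝ) :
    0 ≤ ∑ i, ∑ j, c i * c j * Real.exp (-‖v i - v j‖ ^ 2 / 2) := by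
  have hexp : ∀ x : ℝ, Real.exp x = ∑' k : ℕ, x ^ k / k ! := by
    intro x
    rw [Real.exp_eq_exp_ℝ, NormedSpace.exp_eq_tsum_div]
  set a : Fin n → ℝ := fun i => c i * Real.exp (-‖v i‖ ^ 2 / 2) with ha
  have hterm : ∀ i j : Fin n, c i * c j * Real.exp (-‖v i - v j‖ ^ 2 / 2)
      = ∑' k : ℕ, a i * a j * ((⟪v i, v j⟫ : ℝ) ^ k / k !) := by
    intro i j
    have hn : -‖v i - v j‖ ^ 2 / 2 = -‖v i‖ ^ 2 / 2 + -‖v j‖ ^ 2 / 2 + ⟪v i, v j⟫ := by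
      rw [@norm_sub_sq_real]; ring
    have step : c i * c j * Real.exp (-‖v i - v j‖ ^ 2 / 2)
        = a i * a j * ∑' k : ℕ, (⟪v i, v j⟫ : ℝ) ^ k / k ! := by
      rw [hn, Real.exp_add, Real.exp_add, hexp (⟪v i, v j⟫ : ℝ), ha]
      ring
    rw [step, ← tsum_mul_left]
  simp only [hterm]
  have hsumm : ∀ i j : Fin n,
      Summable (fun k : ℕ => a i * a j * ((⟪v i, v j⟫ : ℝ) ^ k / k !)) :=
    fun i j => (Real.summable_pow_div_factorial _).mul_left _
  have swap : ∀ i : Fin n,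
      (∑ j, ∑' k : ℕ, a i * a j * ((⟪v i, v j⟫ : ℝ) ^ k / k !))
      = ∑' k : ℕ, ∑ j, a i * a j * ((⟪v i, v j⟫ : ℝ) ^ k / k !) :=
    fun i => (Summable.tsum_finsetSum fun j _ => hsumm i j).symm
  simp only [swap]
  rw [← Summable.tsum_finsetSum (fun i _ => summable_sum fun j _ => hsumm i j)]
  refine tsum_nonneg fun k => ?_
  have he : ∀ i j : Fin n, a i * a j * ((⟪v i, v j⟫ : ℝ) ^ k / k !)
      = a i * a j * (⟪v i, v j⟫ : ℝ) ^ k * ((k ! : ℝ))⁻¹ := by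
    intro i j; rw [div_eq_mul_inv]; ring
  simp only [he, ← Finset.sum_mul]
  exact mul_nonneg (pow_inner_psd v a k) (by positivity)
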